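/- Let R be a commutative G-graded ring. If R is G-graded indecomposable (not isomorphic to a direct product of two nontrivial graded ideals), then any graded maximal ideal M of R is a dominating vertex, so the domination number of Gr_G(R) equals 1. -/

import Mathlib

variable {G R : Type*} [AddGroup G] [DecidableEq G] [CommRing R]

/-- The set of proper nontrivial `G`-graded ideals of `R`. -/
def hV (𝒜 : G → AddSubgroup R) [GradedRing 𝒜] : Set (Ideal R) :=
  {I | I ≠ ⊥ ∧ I ≠ ⊤ ∧ Ideal.IsHomogeneous 𝒜 I}

/-- The intersection graph on a set of ideals: two distinct ideals are
adjacent iff their intersection is nonzero. -/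
def interGraph (V : Set (Ideal R)) : SimpleGraph V where
  Adj I J := I ≠ J ∧ (I : Ideal R) ⊓ (J : Ideal R) ≠ ⊥
  symm := ⟨fun I J ⟨h1, h2⟩ => ⟨h1.symm, by rwa [inf_comm] at h2⟩⟩
  loopless := ⟨fun I ⟨h1, _⟩ => h1 rfl⟩
/-- A dominating set in a simple graph. -/
def IsDominating {V : Type*} (Γ : SimpleGraph V) (D : Set V) : Prop :=
  ∀ v : V, v ∈ D ∨ ∃ u ∈ D, Γ.Adj u v

/-- The domination number of a simple graph, as an extended natural number. -/
noncomputable def domNum {V : Type*} (Γ : SimpleGraph V) : ℕ∞ :=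
  ⨅ D : {D : Set V // IsDominating Γ D}, (D : Set V).encard

/-
If a nonzero graded ideal `I` met the graded maximal ideal `M` trivially, then `I ⊄ M`, so
`M ⊔ I` is a graded ideal strictly above `M`, hence `M ⊔ I = R`; together with `M ⊓ I = 0` this
splits `R` as a product of two nontrivial graded ideals. So `M` is adjacent to every other
vertex, and a single vertex dominating the graph forces domination number one.
-/

theorem isDominating_singleton_of_forall_adj {V : Type*} {Γ : SimpleGraph V} {v : V}
    (h : ∀ w, w ≠ v → Γ.Adj v w) : IsDominating Γ {v} := fun w => by
  by_cases hw : w = v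
  · exact Or.inl hw
  · exact Or.inr ⟨v, rfl, h w hw⟩

theorem domNum_eq_one_of_isDominating_singleton {V : Type*} {Γ : SimpleGraph V} {v : V}
    (h : IsDominating Γ {v}) : domNum Γ = 1 := by
  refine le_antisymm ((iInf_le _ ⟨_, h⟩).trans_eq (Set.encard_singleton v)) (le_iInf fun D => ?_)
  rw [Set.one_le_encard_iff_nonempty]
  rcases D.2 v with hv | ⟨u, hu, -⟩
  exacts [⟨v, hv⟩, ⟨u, hu⟩]

def IsGradedIndecomposable (𝒜 : G → AddSubgroup R) [GradedRing 𝒜] : Prop :=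
  ¬ ∃ S T : Ideal R, S.IsHomogeneous 𝒜 ∧ T.IsHomogeneous 𝒜 ∧
    S ≠ ⊥ ∧ T ≠ ⊥ ∧ S ⊓ T = ⊥ ∧ S ⊔ T = ⊤

theorem IsGradedIndecomposable.inf_ne_bot {𝒜 : G → AddSubgroup R} [GradedRing 𝒜]
    (hind : IsGradedIndecomposable 𝒜) {M I : Ideal R} (hM : M.IsHomogeneous 𝒜) (hM0 : M ≠ ⊥)
    (hmax : ∀ J : Ideal R, J.IsHomogeneous 𝒜 → M < J → J = ⊤)
    (hI : I.IsHomogeneous 𝒜) (hI0 : I ≠ ⊥) : M ⊓ I ≠ ⊥ := by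
  intro hbot
  have hlt : M < M ⊔ I := left_lt_sup.2 fun hle => hI0 (by rwa [inf_eq_right.2 hle] at hbot)
  exact hind ⟨M, I, hM, hI, hM0, hI0, hbot, hmax _ (hM.sup hI) hlt⟩

theorem stmt6_general (𝒜 : G → AddSubgroup R) [GradedRing 𝒜]
    (hind : ¬ ∃ S T : Ideal R, Ideal.IsHomogeneous 𝒜 S ∧ Ideal.IsHomogeneous 𝒜 T ∧
      S ≠ ⊥ ∧ T ≠ ⊥ ∧ S ⊓ T = ⊥ ∧ S ⊔ T = ⊤)
    (M : Ideal R) (hM : M ∈ hV 𝒜)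
    (hmax : ∀ J : Ideal R, Ideal.IsHomogeneous 𝒜 J → M < J → J = ⊤) :
    IsDominating (interGraph (hV 𝒜)) {(⟨M, hM⟩ : hV 𝒜)} ∧
      domNum (interGraph (hV 𝒜)) = 1 := by
  have hdom : IsDominating (interGraph (hV 𝒜)) {(⟨M, hM⟩ : hV 𝒜)} :=
    isDominating_singleton_of_forall_adj fun I hIM =>
      ⟨Ne.symm hIM, IsGradedIndecomposable.inf_ne_bot hind hM.2.2 hM.1 hmax I.2.2.2 I.2.1⟩
  exact ⟨hdom, domNum_eq_one_of_isDominating_singleton hdom⟩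

/-- If a commutative `G`-graded ring `R` (with at least one proper
nontrivial graded ideal) is `G`-graded indecomposable, then every graded maximal
ideal `M` (viewed as a vertex) is a dominating vertex, and the domination number
of the intersection graph of graded ideals equals 1. -/
theorem stmt6 (𝒜 : G → AddSubgroup R) [GradedRing 𝒜]
    (hne : (hV 𝒜).Nonempty)
    (hind : ¬ ∃ S T : Ideal R, Ideal.IsHomogeneous 𝒜 S ∧ Ideal.IsHomogeneous 𝒜 T ∧
      S ≠ ⊥ ∧ T ≠ ⊥ ∧ S ⊓ T = ⊥ ∧ S ⊔ T = ⊤)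
    (M : Ideal R) (hM : M ∈ hV 𝒜)
    (hmax : ∀ J : Ideal R, Ideal.IsHomogeneous 𝒜 J → M < J → J = ⊤) :
    IsDominating (interGraph (hV 𝒜)) {(⟨M, hM⟩ : hV 𝒜)} ∧
      domNum (interGraph (hV 𝒜)) = 1 :=
  stmt6_general 𝒜 hind M hM hmax
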